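/- arXiv:0908.0512 — 3 statements merged into one kernel-verified Lean document; each statement's English description precedes it below -/
import Mathlib

section
/- Let n > 0 be a real number and let x be a real number with |x| > 1. Then the set { (n/(x^(2j) − 1) + 1)^k : j ∈ ℕ, j ≥ 1, k ∈ ℕ } is dense in the interval [1, ∞). -/
/-- Let `n > 0` and `|x| > 1` be real.  Then the set of values
`(n / (x ^ (2 * j) - 1) + 1) ^ k` for natural numbers `j ≥ 1` and `k` is dense in `[1, ∞)`. -/
theorem dense_series_parallel_weights (n x : ℝ) (hn : 0 < n) (hx : 1 < |x|) :
    ∀ z ∈ Set.Ici (1 : ℝ),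
      z ∈ closure {w : ℝ | ∃ j : ℕ, 1 ≤ j ∧ ∃ k : ℕ,
        w = (n / (x ^ (2 * j) - 1) + 1) ^ k} := by
  intro z hz
  rw [Set.mem_Ici] at hz
  have hz0 : (0:ℝ) < z := lt_of_lt_of_le one_pos hz
  rw [Metric.mem_closure_iff]
  intro ε hε
  have hx2 : (1:ℝ) < x ^ 2 := by
    have := sq_abs x
    nlinarith [hx]
  -- tendsto : n / ((x^2)^j - 1) → 0
  have htop : Filter.Tendsto (fun j : ℕ => (x ^ 2) ^ j - 1) Filter.atTop Filter.atTop :=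
    Filter.tendsto_atTop_add_const_right _ _ (tendsto_pow_atTop_atTop_of_one_lt hx2)
  have hten : Filter.Tendsto (fun j : ℕ => n / ((x ^ 2) ^ j - 1)) Filter.atTop (nhds 0) :=
    Filter.Tendsto.div_atTop tendsto_const_nhds htop
  have hev : ∀ᶠ j : ℕ in Filter.atTop, n / ((x ^ 2) ^ j - 1) < ε / z := by
    have := hten.eventually (eventually_lt_nhds (div_pos hε hz0))
    simpa using this
  obtain ⟨j, hjε, hj1⟩ := (hev.and (Filter.eventually_ge_atTop 1)).exists
  set a : ℝ := n / (x ^ (2 * j) - 1) + 1 with ha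
  clear_value a
  have hxj : (1:ℝ) < x ^ (2 * j) := by
    rw [pow_mul]
    exact one_lt_pow₀ hx2 (by omega)
  have hxj0 : 0 < x ^ (2 * j) - 1 := by linarith
  have ha1 : 1 < a := by
    have : 0 < n / (x ^ (2 * j) - 1) := div_pos hn hxj0
    linarith
  have ha0 : 0 < a := lt_trans one_pos ha1
  have haε : a - 1 < ε / z := by
    have : n / (x ^ (2 * j) - 1) < ε / z := by
      rw [pow_mul]; exact hjε
    simpa [ha] using this
  have hla : 0 < Real.log a := Real.log_pos ha1
  have hlz : 0 ≤ Real.log z := Real.log_nonneg hz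
  set k : ℕ := ⌊Real.log z / Real.log a⌋₊ with hk
  have hk1 : (k:ℝ) * Real.log a ≤ Real.log z := by
    have := Nat.floor_le (div_nonneg hlz hla.le)
    calc (k:ℝ) * Real.log a ≤ (Real.log z / Real.log a) * Real.log a := by
          exact mul_le_mul_of_nonneg_right this hla.le
      _ = Real.log z := div_mul_cancel₀ _ hla.ne'
  have hk2 : Real.log z < ((k:ℝ) + 1) * Real.log a := by
    have := Nat.lt_floor_add_one (Real.log z / Real.log a)
    calc Real.log z = (Real.log z / Real.log a) * Real.log a := (div_mul_cancel₀ _ hla.ne').symm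
      _ < ((k:ℝ) + 1) * Real.log a := by
          exact mul_lt_mul_of_pos_right (by exact_mod_cast this) hla
  have hak : a ^ k ≤ z := by
    have : Real.log (a ^ k) ≤ Real.log z := by
      rw [Real.log_pow]; exact_mod_cast hk1
    exact (Real.log_le_log_iff (pow_pos ha0 k) hz0).mp this
  have hak1 : z < a ^ (k + 1) := by
    have : Real.log z < Real.log (a ^ (k + 1)) := by
      rw [Real.log_pow]; push_cast; exact hk2
    exact (Real.log_lt_log_iff hz0 (pow_pos ha0 (k+1))).mp this
  refine ⟨a ^ k, ⟨j, hj1, k, by rw [ha]⟩, ?_⟩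
  rw [Real.dist_eq, abs_sub_lt_iff]
  constructor
  · have h1 : z < a ^ k * a := by
      have : a ^ (k + 1) = a ^ k * a := pow_succ a k
      linarith [hak1, this ▸ hak1]
    have h2 : a ^ k * a - a ^ k = a ^ k * (a - 1) := by ring
    have h3 : a ^ k * (a - 1) ≤ z * (a - 1) :=
      mul_le_mul_of_nonneg_right hak (by linarith)
    have h4 : z * (a - 1) < z * (ε / z) :=
      mul_lt_mul_of_pos_left haε hz0
    have h5 : z * (ε / z) = ε := by field_simp
    nlinarith
  · nlinarith [hε]
end

section
/- Let n > 2 be a real number, let y < 0 be a real number, set x = d_n(y) = n/(y − 1) + 1, and assume x < 0 and (x, y) ≠ (−1, −1). Let S be the smallest subset of ℝ containing y that is closed under the parallel composition (a, b) ↦ a·b and under the series composition (a, b) ↦ d_n(d_n(a)·d_n(b)). Then S is dense in ℝ. -/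
/-- The Potts duality map with `n` colors: the dual weight of `y` is `n / (y - 1) + 1`,
so that `(x - 1) * (y - 1) = n` for `x = pottsDual n y`. -/
noncomputable def pottsDual (n y : ℝ) : ℝ := n / (y - 1) + 1

/-- `PottsGen n y` is (the membership predicate of) the smallest subset of `ℝ` containing
`y` that is closed under parallel composition `(a, b) ↦ a * b` and series composition
`(a, b) ↦ pottsDual n (pottsDual n a * pottsDual n b)`. -/
inductive PottsGen (n y : ℝ) : ℝ → Prop
  | base : PottsGen n y y
  | parallel {a b : ℝ} : PottsGen n y a → PottsGen n y b → PottsGen n y (a * b)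
  | series {a b : ℝ} : PottsGen n y a → PottsGen n y b →
      PottsGen n y (pottsDual n (pottsDual n a * pottsDual n b))

/-!
For `n ≠ 0`, `pottsDual n` is an involution of `ℝ`, so series composition is parallel
composition of the duals, and dualizing maps the weights generated by `x = pottsDual n y` into
those generated by `y`. If `x < -1`, the powers `x ^ k` tend to `±∞` alternately, so their duals,
generated by `y`, accumulate at `1` from above and from below. A closed multiplicative subset
of `ℝ` with this property and a negative element is all of `ℝ`: powers of elements close to `1`
fill out the positive reals, and multiplying by the negative element gives the rest. If
`-1 < y < 0`, an odd power of `y` close to `0` has dual `< -1` and the first case applies to it.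
Duality reduces the remaining cases to these two, except `x = y = -1`.
-/

open Set Filter Topology

section PottsDual

variable {n : ℝ}

theorem pottsDual_pottsDual (hn : n ≠ 0) (t : ℝ) : pottsDual n (pottsDual n t) = t := by
  by_cases ht : t = 1
  -- `n / 0 = 0` makes `1` a fixed point
  · simp [pottsDual, ht]
  · simp [pottsDual, hn]

theorem pottsDual_eq_one_iff (hn : n ≠ 0) {t : ℝ} : pottsDual n t = 1 ↔ t = 1 := by
  rw [Function.Involutive.eq_iff (pottsDual_pottsDual hn)]
  simp [pottsDual]

theorem continuousAt_pottsDual {t : ℝ} (ht : t ≠ 1) : ContinuousAt (pottsDual n) t :=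
  (continuousAt_const.div (continuousAt_id.sub continuousAt_const) (sub_ne_zero.2 ht)).add
    continuousAt_const

theorem tendsto_pottsDual_atTop : Tendsto (pottsDual n) atTop (𝓝 1) := by
  have h := ((tendsto_const_nhds (x := n)).div_atTop
    (tendsto_atTop_add_const_right _ (-1 : ℝ) tendsto_id)).add_const 1
  simp only [← sub_eq_add_neg, zero_add] at h
  exact h

theorem one_lt_pottsDual (hn : 0 < n) {t : ℝ} (ht : 1 < t) : 1 < pottsDual n t := by
  have := div_pos hn (sub_pos.2 ht)
  unfold pottsDual
  linarith

theorem pottsDual_mem_Ioo (hn : 0 < n) {t : ℝ} (ht : t < 1 - n) : pottsDual n t ∈ Ioo 0 1 := by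
  have ht1 : t - 1 < 0 := by linarith
  have hlo : -1 < n / (t - 1) := by rw [lt_div_iff_of_neg ht1]; linarith
  have hhi : n / (t - 1) < 0 := div_neg_of_pos_of_neg hn ht1
  unfold pottsDual
  constructor <;> linarith

theorem pottsDual_lt_neg_one {c : ℝ} (hc : 1 - n / 2 < c) (hc1 : c < 1) : pottsDual n c < -1 := by
  have := (div_lt_iff_of_neg (sub_neg.2 hc1)).2 (by linarith : -2 * (c - 1) < n)
  unfold pottsDual
  linarith

end PottsDual

theorem Subsemigroup.pow_succ_mem {α : Type*} [Monoid α] {M : Subsemigroup α} {u : α}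
    (hu : u ∈ M) (k : ℕ) : u ^ (k + 1) ∈ M := by
  induction k with
  | zero => simpa using hu
  | succ k ih => rw [pow_succ]; exact M.mul_mem ih hu

namespace Subsemigroup

variable {M : Subsemigroup ℝ}

theorem Ici_one_subset (hM : IsClosed (M : Set ℝ))
    (h1 : (1 : ℝ) ∈ _root_.closure (Ioi 1 ∩ M)) : Ici 1 ⊆ (M : Set ℝ) := by
  intro t (ht : 1 ≤ t)
  have ht0 : 0 < t := by linarith
  rw [← hM.closure_eq, Metric.mem_closure_iff]
  intro ε hε
  obtain ⟨u, hu, hu1, huM⟩ :=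
    mem_closure_iff.1 h1 (Iio (1 + ε / t)) isOpen_Iio (lt_add_of_pos_right 1 (div_pos hε ht0))
  obtain ⟨k, hk, hk'⟩ := exists_nat_pow_near ht hu1
  refine ⟨u ^ (k + 1), pow_succ_mem huM k, ?_⟩
  rw [Real.dist_eq, abs_sub_comm, abs_of_pos (by linarith)]
  calc u ^ (k + 1) - t ≤ u ^ k * (u - 1) := by rw [pow_succ]; nlinarith
    _ ≤ t * (u - 1) := by gcongr; exact (sub_pos.2 hu1).le
    _ < t * (ε / t) := by gcongr; simp only [mem_Iio] at hu; linarith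
    _ = ε := mul_div_cancel₀ _ ht0.ne'

theorem Ioi_zero_subset (hM : IsClosed (M : Set ℝ))
    (h1 : (1 : ℝ) ∈ _root_.closure (Ioi 1 ∩ M))
    {v : ℝ} (hvM : v ∈ M) (hv : v ∈ Ioo 0 1) : Ioi 0 ⊆ (M : Set ℝ) := by
  intro t (ht : 0 < t)
  obtain ⟨k, hk⟩ := exists_pow_lt_of_lt_one ht hv.2
  have hpos : 0 < v ^ (k + 1) := pow_pos hv.1 _
  have hlt : v ^ (k + 1) < t := (pow_le_pow_of_le_one hv.1.le hv.2.le k.le_succ).trans_lt hk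
  have hquot : t / v ^ (k + 1) ∈ M := Ici_one_subset hM h1 ((one_le_div hpos).2 hlt.le)
  simpa [mul_div_cancel₀ t hpos.ne'] using M.mul_mem (pow_succ_mem hvM k) hquot

theorem dense_of_one_mem_closure_Ioi (S : Subsemigroup ℝ)
    (h1 : (1 : ℝ) ∈ _root_.closure (Ioi 1 ∩ S))
    {v : ℝ} (hvS : v ∈ S) (hv : v ∈ Ioo 0 1) {c : ℝ} (hcS : c ∈ S) (hc : c < 0) :
    Dense (S : Set ℝ) := by
  set M := S.topologicalClosure
  have hM : IsClosed (M : Set ℝ) := S.isClosed_topologicalClosure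
  have hSM : (S : Set ℝ) ⊆ M := S.le_topologicalClosure
  have hpos : Ioi 0 ⊆ (M : Set ℝ) :=
    Ioi_zero_subset hM (_root_.closure_mono (inter_subset_inter_right _ hSM) h1) (hSM hvS) hv
  intro t
  rcases lt_trichotomy t 0 with ht | rfl | ht
  · have := M.mul_mem (hSM hcS) (hpos (div_pos_of_neg_of_neg ht hc))
    rwa [mul_div_cancel₀ t hc.ne] at this
  · exact closure_minimal hpos hM (by rw [closure_Ioi]; exact self_mem_Ici)
  · exact hpos ht

end Subsemigroup

def pottsWeights (n y : ℝ) : Subsemigroup ℝ where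
  carrier := {z | PottsGen n y z}
  mul_mem' := PottsGen.parallel

section PottsGen

variable {n y : ℝ}

theorem PottsGen.trans {c z : ℝ} (hc : PottsGen n y c) (hz : PottsGen n c z) :
    PottsGen n y z := by
  induction hz with
  | base => exact hc
  | parallel _ _ iha ihb => exact iha.parallel ihb
  | series _ _ iha ihb => exact iha.series ihb

theorem PottsGen.dual (hn : n ≠ 0) {z : ℝ} (hz : PottsGen n (pottsDual n y) z) :
    PottsGen n y (pottsDual n z) := by
  induction hz with
  | base => rw [pottsDual_pottsDual hn]; exact base
  | parallel _ _ iha ihb => simpa only [pottsDual_pottsDual hn] using iha.series ihb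
  | series _ _ iha ihb => rw [pottsDual_pottsDual hn]; exact iha.parallel ihb

theorem Dense.of_pottsDual (hn : n ≠ 0) (h : Dense {z | PottsGen n (pottsDual n y) z}) :
    Dense {z | PottsGen n y z} := by
  have hsub : ({1}ᶜ : Set ℝ) ⊆ closure {z | PottsGen n y z} := fun t ht => by
    have hcont : ContinuousAt (pottsDual n) (pottsDual n t) :=
      continuousAt_pottsDual (by rwa [ne_eq, pottsDual_eq_one_iff hn])
    have := hcont.continuousWithinAt.mem_closure_image (h (pottsDual n t))
    rw [pottsDual_pottsDual hn] at this
    exact closure_mono (image_subset_iff.2 fun z hz => hz.dual hn) this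
  exact dense_closure.1 ((dense_compl_singleton 1).mono hsub)

theorem dense_pottsGen_of_pottsDual_lt_neg_one (hn : 0 < n) (hy : y < 0)
    (hx : pottsDual n y < -1) : Dense {z | PottsGen n y z} := by
  set x := pottsDual n y
  have hx2 : 1 < x * x := by nlinarith
  have hpow : ∀ k : ℕ, PottsGen n x ((x * x) ^ (k + 1)) :=
    Subsemigroup.pow_succ_mem (M := pottsWeights n x) (PottsGen.parallel .base .base)
  have hup : Tendsto (fun k : ℕ => (x * x) ^ (k + 1)) atTop atTop :=
    (tendsto_pow_atTop_atTop_of_one_lt hx2).comp (tendsto_add_atTop_nat 1)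
  have habove : (1 : ℝ) ∈ closure (Ioi 1 ∩ {z | PottsGen n y z}) :=
    mem_closure_of_tendsto ((tendsto_pottsDual_atTop (n := n)).comp hup) (.of_forall fun k =>
      ⟨one_lt_pottsDual hn (one_lt_pow₀ hx2 k.succ_ne_zero), (hpow k).dual hn.ne'⟩)
  obtain ⟨k, hk⟩ := ((hup.const_mul_atTop_of_neg (by linarith : x < 0)).eventually
    (eventually_lt_atBot (1 - n))).exists
  exact (pottsWeights n y).dense_of_one_mem_closure_Ioi habove
    ((PottsGen.parallel .base (hpow k)).dual hn.ne') (pottsDual_mem_Ioo hn hk) .base hy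

theorem dense_pottsGen_of_neg_one_lt (hn : 2 < n) (hy1 : -1 < y) (hy0 : y < 0) :
    Dense {z | PottsGen n y z} := by
  have hlim : Tendsto (fun k : ℕ => y * (y * y) ^ (k + 1)) atTop (𝓝 0) := by
    simpa using ((tendsto_pow_atTop_nhds_zero_of_lt_one (mul_self_nonneg y) (by nlinarith)).comp
      (tendsto_add_atTop_nat 1)).const_mul y
  obtain ⟨k, hk⟩ := (hlim.eventually (lt_mem_nhds (by linarith : 1 - n / 2 < 0))).exists
  have hc : y * (y * y) ^ (k + 1) < 0 :=
    mul_neg_of_neg_of_pos hy0 (pow_pos (mul_self_pos.2 hy0.ne) _)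
  have hcy : PottsGen n y (y * (y * y) ^ (k + 1)) := PottsGen.parallel .base
    (Subsemigroup.pow_succ_mem (M := pottsWeights n y) (PottsGen.parallel .base .base) k)
  exact (dense_pottsGen_of_pottsDual_lt_neg_one (by linarith) hc
    (pottsDual_lt_neg_one hk (by linarith))).mono fun z hz => hcy.trans hz

end PottsGen

/-- For `n > 2`, `y < 0`, `x = pottsDual n y < 0` and `(x, y) ≠ (-1, -1)`, the set of
weights generated from `y` by parallel and series compositions is dense in `ℝ`. -/
theorem dense_potts_weights (n y : ℝ) (hn : 2 < n) (hy : y < 0)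
    (hx : pottsDual n y < 0) (hxy : ¬(pottsDual n y = -1 ∧ y = -1)) :
    Dense {z : ℝ | PottsGen n y z} := by
  have hn0 : n ≠ 0 := by linarith
  have hcases : ∀ w < 0, -1 < w ∨ pottsDual n w < -1 → Dense {z | PottsGen n w z} :=
    fun w hw h => h.elim (dense_pottsGen_of_neg_one_lt hn · hw)
      (dense_pottsGen_of_pottsDual_lt_neg_one (by linarith) hw)
  by_cases h : -1 < y ∨ pottsDual n y < -1
  · exact hcases y hy h
  · refine Dense.of_pottsDual hn0 (hcases _ hx ?_)
    rw [pottsDual_pottsDual hn0]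
    simp only [not_or, not_lt] at h
    by_contra! h'
    exact hxy ⟨le_antisymm h'.1 h.2, le_antisymm h.1 h'.2⟩
end

section
/- Let a and b be real numbers with 0 < b < 1/4, and set a′ = (2a − 1)²/(1 + (2a − 1)²). If 1/2 ≤ a < 1/2 + b, then a′ < 4b²; and if a > 1/2 + 2b, then a′ > 8b². -/
/-- The separation estimate in the proof that `SBQP = A₀PP`.  For `0 < b < 1/4` and
`a' = (2a - 1)² / (1 + (2a - 1)²)`: if `1/2 ≤ a < 1/2 + b` then `a' < 4b²`, and if
`a > 1/2 + 2b` then `a' > 8b²`. -/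
theorem sbqp_separation (a b : ℝ) (hb0 : 0 < b) (hb4 : b < 1 / 4) :
    ((1 / 2 ≤ a ∧ a < 1 / 2 + b) →
      (2 * a - 1) ^ 2 / (1 + (2 * a - 1) ^ 2) < 4 * b ^ 2) ∧
    (a > 1 / 2 + 2 * b →
      (2 * a - 1) ^ 2 / (1 + (2 * a - 1) ^ 2) > 8 * b ^ 2) := by
  have hpos : (0:ℝ) < 1 + (2 * a - 1) ^ 2 := by positivity
  constructor
  · rintro ⟨h1, h2⟩
    rw [div_lt_iff₀ hpos]
    nlinarith [sq_nonneg (2*a-1), sq_nonneg b, sq_nonneg (2*a-1-2*b)]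
  · intro h
    rw [gt_iff_lt, lt_div_iff₀ hpos]
    have hx : 4*b < 2*a-1 := by linarith
    have hx2 : 16*b^2 < (2*a-1)^2 := by nlinarith
    have hb2 : b^2 < 1/16 := by nlinarith
    have h8 : (0:ℝ) < 1 - 8*b^2 := by nlinarith
    nlinarith [mul_lt_mul_of_pos_left hx2 h8, mul_pos (mul_pos hb0 hb0) (mul_pos hb0 hb0), mul_lt_mul_of_pos_left hb2 (mul_pos hb0 hb0)]
end
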